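/- arXiv:1908.01203 — 2 statements merged into one kernel-verified Lean document; each statement's English description precedes it below -/
import Mathlib

section
/- Define ω_{RSE} = (1/2)(|1_R 1_S 1_E⟩⟨1_R 1_S 1_E| + (1/(d_S d_E)) |2_R⟩⟨2_R| ⊗ I_{SE}) with d_S = d_E = 2. Then S(ω_{RS}) + S(ω_{SE}) − S(ω_{RSE}) − S(ω_S) > 0, i.e., the conditional mutual information I(R:E|S) is strictly positive. -/
/-!
The state `ω` is block diagonal in `R`: on the block `R = 0` it is the pure product state
`|v⟩|u⟩`, on the block `R = 1` it is maximally mixed. Hence each of the four states is either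
`a |w⟩⟨w| + b 1` or `|0⟩⟨0| ⊗ a |w⟩⟨w| + |1⟩⟨1| ⊗ b 1` for a unit vector `w`, and completing `w`
to an orthonormal basis diagonalises it. The spectra are `{1/2, 0, 1/4, 1/4}` for `ω_RS`,
`{5/8, 1/8, 1/8, 1/8}` for `ω_SE`, `{1/2, 0, 0, 0, 1/8, 1/8, 1/8, 1/8}` for `ω_RSE` and
`{3/4, 1/4}` for `ω_S`, so that `I(R:E|S) = (1/8) log (2⁴ 3⁶ / 5⁵) > 0`.
-/

open scoped Kronecker ComplexOrder Matrix

/-- Logarithm of a Hermitian matrix via its spectral decomposition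
(zero eigenvalues contribute `log 0 = 0`). -/
noncomputable def matLog {n : Type*} [Fintype n] [DecidableEq n] (M : Matrix n n ℂ) :
    Matrix n n ℂ :=
  if h : M.IsHermitian then
    (h.eigenvectorUnitary : Matrix n n ℂ) *
      Matrix.diagonal (fun i => (Real.log (h.eigenvalues i) : ℂ)) *
      star (h.eigenvectorUnitary : Matrix n n ℂ)
  else 0

/-- von Neumann entropy `S(ρ) = -Tr(ρ log ρ)`. -/
noncomputable def vnEntropy {n : Type*} [Fintype n] [DecidableEq n] (M : Matrix n n ℂ) : ℝ :=
  -(M * matLog M).trace.re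

/-- Quantum relative entropy `S(ρ‖σ) = Tr(ρ log ρ) - Tr(ρ log σ)`. -/
noncomputable def relEntropy {n : Type*} [Fintype n] [DecidableEq n]
    (ρ σ : Matrix n n ℂ) : ℝ :=
  ((ρ * matLog ρ).trace - (ρ * matLog σ).trace).re

/-- A density operator: positive semidefinite with unit trace. -/
def IsDensity {n : Type*} [Fintype n] (M : Matrix n n ℂ) : Prop :=
  M.PosSemidef ∧ M.trace = 1

/-- Partial trace over the left tensor factor. -/
noncomputable def ptraceLeft {a b : Type*} [Fintype a] (M : Matrix (a × b) (a × b) ℂ) :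
    Matrix b b ℂ :=
  Matrix.of fun i j => ∑ k, M (k, i) (k, j)

/-- Partial trace over the right tensor factor. -/
noncomputable def ptraceRight {a b : Type*} [Fintype b] (M : Matrix (a × b) (a × b) ℂ) :
    Matrix a a ℂ :=
  Matrix.of fun i j => ∑ k, M (i, k) (j, k)

/-- Mutual information `I(A:B) = S(ρ_A) + S(ρ_B) - S(ρ_AB)`. -/
noncomputable def mutInfo {a b : Type*} [Fintype a] [Fintype b] [DecidableEq a] [DecidableEq b]
    (M : Matrix (a × b) (a × b) ℂ) : ℝ :=
  vnEntropy (ptraceRight M) + vnEntropy (ptraceLeft M) - vnEntropy M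

/-- The extension `id_r ⊗ Φ` of a map `Φ` on matrices, acting blockwise. -/
noncomputable def idTen {r s t : Type*} [Fintype s]
    (Φ : Matrix s s ℂ → Matrix t t ℂ) (M : Matrix (r × s) (r × s) ℂ) :
    Matrix (r × t) (r × t) ℂ :=
  Matrix.of fun x y => Φ (Matrix.of fun a b => M (x.1, a) (y.1, b)) x.2 y.2

open Matrix Polynomial Real Unitary

section Spectral

variable {n : Type*} [Fintype n]

theorem nonempty_of_star_dotProduct_self_eq_one {w : n → ℂ} (hw : star w ⬝ᵥ w = 1) :
    Nonempty n := by
  by_contra h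
  rw [not_nonempty_iff] at h
  simp at hw

variable [DecidableEq n]

theorem trace_conjStarAlgAut (U : unitaryGroup n ℂ) (A : Matrix n n ℂ) :
    (conjStarAlgAut ℂ _ U A).trace = A.trace := by
  rw [conjStarAlgAut_apply, trace_mul_cycle, coe_star_mul_self, one_mul]

theorem Matrix.IsHermitian.vnEntropy_eq_sum_negMulLog {M : Matrix n n ℂ} (hM : M.IsHermitian) :
    vnEntropy M = ∑ i, negMulLog (hM.eigenvalues i) := by
  have hprod : M * matLog M = conjStarAlgAut ℂ _ hM.eigenvectorUnitary
      (diagonal fun i => ((hM.eigenvalues i * log (hM.eigenvalues i) : ℝ) : ℂ)) := by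
    rw [matLog, dif_pos hM, ← conjStarAlgAut_apply (S := ℂ)]
    nth_rewrite 1 [hM.spectral_theorem]
    rw [← map_mul, diagonal_mul_diagonal]
    simp
  rw [vnEntropy, hprod, trace_conjStarAlgAut, trace_diagonal, ← Complex.ofReal_sum,
    Complex.ofReal_re, ← Finset.sum_neg_distrib]
  simp [negMulLog]

theorem Matrix.IsHermitian.sum_comp_eigenvalues_eq_of_charpoly_eq {M : Matrix n n ℂ}
    (hM : M.IsHermitian) {d : n → ℝ} (h : M.charpoly = ∏ i, (X - C (d i : ℂ))) (f : ℝ → ℝ) :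
    ∑ i, f (hM.eigenvalues i) = ∑ i, f (d i) := by
  have hroots : Finset.univ.val.map (fun i => (hM.eigenvalues i : ℂ)) =
      Finset.univ.val.map (fun i => (d i : ℂ)) := by
    rw [← Function.comp_def Complex.ofReal, ← RCLike.ofReal_eq_complex_ofReal,
      ← hM.roots_charpoly_eq_eigenvalues, h,
      roots_prod _ _ (Finset.prod_ne_zero_iff.mpr fun i _ => X_sub_C_ne_zero _)]
    simp
  have hreal : Finset.univ.val.map hM.eigenvalues = Finset.univ.val.map d := by
    simpa only [Multiset.map_map, Function.comp_def, Complex.ofReal_re] using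
      congrArg (Multiset.map Complex.re) hroots
  have hsum := congrArg (fun s => (s.map f).sum) hreal
  simp only [Multiset.map_map, Function.comp_def] at hsum
  exact hsum

theorem vnEntropy_conjStarAlgAut_diagonal (U : unitaryGroup n ℂ) (d : n → ℝ) :
    vnEntropy (conjStarAlgAut ℂ _ U (diagonal fun i => (d i : ℂ))) = ∑ i, negMulLog (d i) := by
  have hM : (conjStarAlgAut ℂ _ U (diagonal fun i => (d i : ℂ))).IsHermitian := by
    rw [conjStarAlgAut_apply, star_eq_conjTranspose]
    exact isHermitian_mul_mul_conjTranspose _ (isHermitian_diagonal_of_self_adjoint _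
      (funext fun i => Complex.conj_ofReal _))
  have hchar : (conjStarAlgAut ℂ _ U (diagonal fun i => (d i : ℂ))).charpoly =
      ∏ i, (X - C (d i : ℂ)) := by
    rw [conjStarAlgAut_apply, charpoly_mul_comm, ← mul_assoc, coe_star_mul_self, one_mul,
      charpoly_diagonal]
  rw [hM.vnEntropy_eq_sum_negMulLog, hM.sum_comp_eigenvalues_eq_of_charpoly_eq hchar]

theorem exists_conjStarAlgAut_single_eq_vecMulVec {w : n → ℂ} (hw : star w ⬝ᵥ w = 1) (i : n) :
    ∃ U : unitaryGroup n ℂ, conjStarAlgAut ℂ _ U (single i i 1) = vecMulVec w (star w) := by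
  have hon : Orthonormal ℂ (({i} : Set n).domRestrict fun _ => WithLp.toLp 2 w) := by
    rw [orthonormal_iff_ite]
    rintro ⟨j, rfl⟩ ⟨k, rfl⟩
    rw [if_pos rfl, EuclideanSpace.inner_eq_star_dotProduct, dotProduct_comm]
    exact hw
  obtain ⟨b, hb⟩ := hon.exists_orthonormalBasis_extension_of_card_eq finrank_euclideanSpace
  have hbi : b i = WithLp.toLp 2 w := hb i rfl
  refine ⟨⟨_, (EuclideanSpace.basisFun n ℂ).toMatrix_orthonormalBasis_mem_unitary b⟩, ?_⟩
  ext j k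
  simp [mul_apply, single_apply, vecMulVec_apply, Module.Basis.toMatrix_apply,
    EuclideanSpace.basisFun_repr, ite_and, hbi]

theorem conjStarAlgAut_one_kronecker {m : Type*} [Fintype m] [DecidableEq m]
    (U : unitaryGroup n ℂ) (A : Matrix m m ℂ) (B : Matrix n n ℂ) :
    conjStarAlgAut ℂ (Matrix (m × n) (m × n) ℂ)
        ⟨1 ⊗ₖ (U : Matrix n n ℂ), kronecker_mem_unitary (one_mem _) U.2⟩ (A ⊗ₖ B) =
      A ⊗ₖ conjStarAlgAut ℂ _ U B := by
  simp only [conjStarAlgAut_apply, star_eq_conjTranspose, conjTranspose_kronecker,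
    conjTranspose_one, ← mul_kronecker_mul, one_mul, mul_one]

theorem vnEntropy_smul_vecMulVec_add_smul_one {w : n → ℂ} (hw : star w ⬝ᵥ w = 1) (a b : ℝ) :
    vnEntropy ((a : ℂ) • vecMulVec w (star w) + (b : ℂ) • 1) =
      negMulLog (a + b) + (Fintype.card n - 1) * negMulLog b := by
  obtain ⟨i⟩ := nonempty_of_star_dotProduct_self_eq_one hw
  obtain ⟨U, hU⟩ := exists_conjStarAlgAut_single_eq_vecMulVec hw i
  have hdiag : (a : ℂ) • single i i 1 + (b : ℂ) • 1 =
      diagonal fun j => ((if i = j then a + b else b : ℝ) : ℂ) := by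
    ext j k
    by_cases hjk : j = k <;> by_cases hij : i = j <;> simp_all [one_apply]
  rw [← hU, ← map_one (conjStarAlgAut ℂ _ U), ← map_smul, ← map_smul, ← map_add, hdiag,
    vnEntropy_conjStarAlgAut_diagonal]
  simp [apply_ite negMulLog, Finset.sum_ite, Finset.filter_eq, Finset.filter_ne,
    Nat.cast_sub (Fintype.card_pos_iff.mpr ⟨i⟩)]

theorem vnEntropy_smul_kronecker_vecMulVec_add_smul_kronecker_one {w : n → ℂ}
    (hw : star w ⬝ᵥ w = 1) (a b : ℝ) :
    vnEntropy ((a : ℂ) • (single (0 : Fin 2) 0 1 ⊗ₖ vecMulVec w (star w)) +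
      (b : ℂ) • (single (1 : Fin 2) 1 1 ⊗ₖ (1 : Matrix n n ℂ))) =
      negMulLog a + Fintype.card n * negMulLog b := by
  obtain ⟨i⟩ := nonempty_of_star_dotProduct_self_eq_one hw
  obtain ⟨U, hU⟩ := exists_conjStarAlgAut_single_eq_vecMulVec hw i
  have hdiag : (a : ℂ) • (single (0 : Fin 2) 0 1 ⊗ₖ single i i 1) +
      (b : ℂ) • (single (1 : Fin 2) 1 1 ⊗ₖ (1 : Matrix n n ℂ)) =
      diagonal fun p => ((if p.1 = 0 then (if i = p.2 then a else 0) else b : ℝ) : ℂ) := by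
    ext ⟨r, j⟩ ⟨s, k⟩
    fin_cases r <;> fin_cases s <;> by_cases hjk : j = k <;> by_cases hij : i = j <;>
      simp_all [one_apply]
  rw [← hU, ← map_one (conjStarAlgAut ℂ _ U), ← conjStarAlgAut_one_kronecker,
    ← conjStarAlgAut_one_kronecker, ← map_smul, ← map_smul, ← map_add, hdiag,
    vnEntropy_conjStarAlgAut_diagonal, Fintype.sum_prod_type, Fin.sum_univ_two]
  simp [apply_ite negMulLog]

end Spectral

section PartialTrace

variable {a b c : Type*}

@[simp]
theorem ptraceLeft_add [Fintype a] (M N : Matrix (a × b) (a × b) ℂ) :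
    ptraceLeft (M + N) = ptraceLeft M + ptraceLeft N := by
  ext; simp [ptraceLeft, Finset.sum_add_distrib]

@[simp]
theorem ptraceLeft_smul [Fintype a] (z : ℂ) (M : Matrix (a × b) (a × b) ℂ) :
    ptraceLeft (z • M) = z • ptraceLeft M := by
  ext; simp [ptraceLeft, Finset.mul_sum]

@[simp]
theorem ptraceLeft_kronecker [Fintype a] (A : Matrix a a ℂ) (B : Matrix b b ℂ) :
    ptraceLeft (A ⊗ₖ B) = A.trace • B := by
  ext; simp [ptraceLeft, trace, Finset.sum_mul]

@[simp]
theorem ptraceRight_add [Fintype b] (M N : Matrix (a × b) (a × b) ℂ) :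
    ptraceRight (M + N) = ptraceRight M + ptraceRight N := by
  ext; simp [ptraceRight, Finset.sum_add_distrib]

@[simp]
theorem ptraceRight_smul [Fintype b] (z : ℂ) (M : Matrix (a × b) (a × b) ℂ) :
    ptraceRight (z • M) = z • ptraceRight M := by
  ext; simp [ptraceRight, Finset.mul_sum]

@[simp]
theorem ptraceRight_kronecker [Fintype b] (A : Matrix a a ℂ) (B : Matrix b b ℂ) :
    ptraceRight (A ⊗ₖ B) = B.trace • A := by
  ext; simp [ptraceRight, trace, Finset.mul_sum, mul_comm]

@[simp]
theorem ptraceRight_one [Fintype b] [DecidableEq a] [DecidableEq b] :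
    ptraceRight (1 : Matrix (a × b) (a × b) ℂ) = (Fintype.card b : ℂ) • 1 := by
  ext i j; by_cases h : i = j <;> simp [ptraceRight, one_apply, h]

@[simp]
theorem idTen_ptraceRight_add [Fintype b] [Fintype c] (M N : Matrix (a × b × c) (a × b × c) ℂ) :
    idTen ptraceRight (M + N) = idTen ptraceRight M + idTen ptraceRight N := by
  ext; simp [idTen, ptraceRight, Finset.sum_add_distrib]

@[simp]
theorem idTen_ptraceRight_smul [Fintype b] [Fintype c] (z : ℂ)
    (M : Matrix (a × b × c) (a × b × c) ℂ) :
    idTen ptraceRight (z • M) = z • idTen ptraceRight M := by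
  ext; simp [idTen, ptraceRight, Finset.mul_sum]

@[simp]
theorem idTen_ptraceRight_kronecker [Fintype b] [Fintype c] (A : Matrix a a ℂ)
    (B : Matrix (b × c) (b × c) ℂ) :
    idTen ptraceRight (A ⊗ₖ B) = A ⊗ₖ ptraceRight B := by
  ext; simp [idTen, ptraceRight, Finset.mul_sum]

end PartialTrace

theorem vecMulVec_star_kronecker_vecMulVec_star {m n : Type*} (v : m → ℂ) (u : n → ℂ) :
    vecMulVec v (star v) ⊗ₖ vecMulVec u (star u) =
      vecMulVec (fun p => v p.1 * u p.2) (star fun p => v p.1 * u p.2) := by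
  ext; simp [vecMulVec_apply]; ring

theorem star_dotProduct_self_prod {m n : Type*} [Fintype m] [Fintype n] (v : m → ℂ) (u : n → ℂ) :
    star (fun p : m × n => v p.1 * u p.2) ⬝ᵥ (fun p => v p.1 * u p.2) =
      (star v ⬝ᵥ v) * (star u ⬝ᵥ u) := by
  simp only [dotProduct, Fintype.sum_prod_type, Finset.sum_mul_sum, Pi.star_apply, star_mul']
  congr! 2; ring

theorem negMulLog_eighth_add_negMulLog_three_quarters_lt :
    negMulLog (1 / 8) + negMulLog (3 / 4) < negMulLog (1 / 4) + negMulLog (5 / 8) := by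
  have hlog4 : log 4 = 2 * log 2 := by
    rw [show (4 : ℝ) = 2 ^ 2 by norm_num, log_pow, Nat.cast_ofNat]
  have hlog8 : log 8 = 3 * log 2 := by
    rw [show (8 : ℝ) = 2 ^ 3 by norm_num, log_pow, Nat.cast_ofNat]
  have hlog : 5 * log 5 < 4 * log 2 + 6 * log 3 := by
    have h := log_lt_log (by norm_num) (show (5 : ℝ) ^ 5 < 2 ^ 4 * 3 ^ 6 by norm_num)
    rw [log_mul (by norm_num) (by norm_num), log_pow, log_pow, log_pow] at h
    exact_mod_cast h
  norm_num [negMulLog, log_div, hlog4, hlog8]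
  linarith

/-- for the concrete non-Markov reference state with `d_S = d_E = 2`, the
conditional mutual information `I(R:E|S)` is strictly positive. -/
theorem conditional_mutInfo_pos_for_reference_state
    (v u : Fin 2 → ℂ) (hv : star v ⬝ᵥ v = 1) (hu : star u ⬝ᵥ u = 1)
    (ω : Matrix (Fin 2 × Fin 2 × Fin 2) (Fin 2 × Fin 2 × Fin 2) ℂ)
    (hω : ω = (1/2 : ℂ) •
      (Matrix.single (0 : Fin 2) (0 : Fin 2) (1 : ℂ) ⊗ₖ
          (Matrix.vecMulVec v (star v) ⊗ₖ Matrix.vecMulVec u (star u)) +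
        (1/4 : ℂ) • (Matrix.single (1 : Fin 2) (1 : Fin 2) (1 : ℂ) ⊗ₖ
          (1 : Matrix (Fin 2 × Fin 2) (Fin 2 × Fin 2) ℂ)))) :
    0 < vnEntropy (Matrix.of fun (x y : Fin 2 × Fin 2) =>
          ∑ k : Fin 2, ω (x.1, x.2, k) (y.1, y.2, k))
        + vnEntropy (ptraceLeft ω) - vnEntropy ω
        - vnEntropy (ptraceRight (ptraceLeft ω)) := by
  set vu : Fin 2 × Fin 2 → ℂ := fun p => v p.1 * u p.2
  have hvu : star vu ⬝ᵥ vu = 1 := by rw [star_dotProduct_self_prod, hv, hu, one_mul]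
  have hPu : (vecMulVec u (star u)).trace = 1 := by rw [trace_vecMulVec, dotProduct_comm, hu]
  have hPvu : vecMulVec v (star v) ⊗ₖ vecMulVec u (star u) = vecMulVec vu (star vu) :=
    vecMulVec_star_kronecker_vecMulVec_star v u
  have hRSE : ω = ((1/2 : ℝ) : ℂ) • (single 0 0 1 ⊗ₖ vecMulVec vu (star vu)) +
      ((1/8 : ℝ) : ℂ) • (single 1 1 1 ⊗ₖ 1) := by
    norm_num [hω, hPvu, smul_smul]
  have hRS : (of fun (x y : Fin 2 × Fin 2) => ∑ k : Fin 2, ω (x.1, x.2, k) (y.1, y.2, k)) =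
      ((1/2 : ℝ) : ℂ) • (single 0 0 1 ⊗ₖ vecMulVec v (star v)) +
      ((1/4 : ℝ) : ℂ) • (single 1 1 1 ⊗ₖ 1) := by
    change idTen ptraceRight ω = _
    norm_num [hω, hPu, kronecker_smul, smul_smul]
  have hSE : ptraceLeft ω = ((1/2 : ℝ) : ℂ) • vecMulVec vu (star vu) + ((1/8 : ℝ) : ℂ) • 1 := by
    simp [hRSE]
  have hS : ptraceRight (ptraceLeft ω) =
      ((1/2 : ℝ) : ℂ) • vecMulVec v (star v) + ((1/4 : ℝ) : ℂ) • 1 := by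
    norm_num [hω, hPu, smul_smul]
  rw [hRS, hS, hSE, hRSE, vnEntropy_smul_vecMulVec_add_smul_one hvu,
    vnEntropy_smul_vecMulVec_add_smul_one hv,
    vnEntropy_smul_kronecker_vecMulVec_add_smul_kronecker_one hv,
    vnEntropy_smul_kronecker_vecMulVec_add_smul_kronecker_one hvu]
  norm_num
  linarith [negMulLog_eighth_add_negMulLog_three_quarters_lt]
end

section
/- For a real number a and Bloch vector α⃗ ∈ R^3, the 4×4 matrix τ = (1/4)(I ⊗ I + Σ_{i=1}^3 α^{(i)} σ^{(i)} ⊗ I + a Σ_{i=1}^3 σ^{(i)} ⊗ σ^{(i)}) is positive semidefinite if and only if: when a ≥ 0, |α⃗| ≤ √((1+a)(1−3a)) (requiring a ≤ 1/3), and when a ≤ 0, |α⃗| ≤ 1 + a. -/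
open scoped Kronecker ComplexOrder Matrix

/-- The Pauli matrices. -/
noncomputable def pauli : Fin 3 → Matrix (Fin 2) (Fin 2) ℂ
  | 0 => !![0, 1; 1, 0]
  | 1 => !![0, -Complex.I; Complex.I, 0]
  | 2 => !![1, 0; 0, -1]

/-!
Write the matrix as `τ = ¼ (1 + A ⊗ 1 + a P)` with `A = α⃗ · σ⃗` and `P = Σᵢ σᵢ ⊗ σᵢ`.
The key identity is `P = 2 SWAP - 1`; since `SWAP` commutes with every `U ⊗ U`, conjugating
by `U ⊗ U`, where the unitary `U` diagonalises the traceless Hermitian `A`, replaces `A` by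
`diag(s, -s)` with `s² = |α⃗|²` and leaves `P` unchanged. The result is block diagonal:
entries `(1 ± s + a)/4` on `|00⟩`, `|11⟩` and the block `¼ [[1 + s - a, 2a], [2a, 1 - s - a]]`
on `span {|01⟩, |10⟩}`, which is positive semidefinite iff `|s| ≤ 1 - a` and
`s² ≤ (1 - a)² - 4a² = (1 + a)(1 - 3a)`.
-/

open Matrix

lemma forall_quadratic_nonneg_iff {p q b : ℝ} :
    (∀ u v : ℝ, 0 ≤ p * u ^ 2 + q * v ^ 2 + 2 * b * (u * v)) ↔ 0 ≤ p ∧ 0 ≤ q ∧ b ^ 2 ≤ p * q := by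
  refine ⟨fun h ↦ ⟨by simpa using h 1 0, by simpa using h 0 1, ?_⟩, ?_⟩
  · have := discrim_le_zero (a := p) (b := 2 * b) (c := q) fun u ↦ (h u 1).trans_eq (by ring)
    rw [discrim] at this
    linarith
  · rintro ⟨hp, hq, hb⟩ u v
    rcases hp.eq_or_lt with rfl | hp
    · obtain rfl : b = 0 := by nlinarith
      nlinarith [sq_nonneg v]
    · nlinarith [sq_nonneg (p * u + b * v), mul_nonneg (sub_nonneg.2 hb) (sq_nonneg v)]

lemma forall_complex_quadratic_nonneg_iff {p q b : ℝ} :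
    (∀ z w : ℂ, 0 ≤ p * ‖z‖ ^ 2 + q * ‖w‖ ^ 2 + 2 * b * (starRingEnd ℂ z * w).re) ↔
      0 ≤ p ∧ 0 ≤ q ∧ b ^ 2 ≤ p * q := by
  rw [← forall_quadratic_nonneg_iff]
  refine ⟨fun h u v ↦ by simpa using h u v, fun h z w ↦ ?_⟩
  have hre : |(starRingEnd ℂ z * w).re| ≤ ‖z‖ * ‖w‖ := by
    simpa using Complex.abs_re_le_norm (starRingEnd ℂ z * w)
  rcases le_total 0 b with hb | hb
  · linarith [h ‖z‖ (-‖w‖), mul_nonneg hb (neg_le_iff_add_nonneg.1 (abs_le.1 hre).1)]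
  · linarith [h ‖z‖ ‖w‖, mul_nonneg_of_nonpos_of_nonpos hb (sub_nonpos.2 (abs_le.1 hre).2)]

namespace Matrix.IsHermitian

variable {𝕜 : Type*} [RCLike 𝕜] {A : Matrix (Fin 2) (Fin 2) 𝕜} (hA : A.IsHermitian)
include hA

lemma eigenvalues_one_eq_neg (htr : A.trace = 0) : hA.eigenvalues 1 = -hA.eigenvalues 0 := by
  have := hA.trace_eq_sum_eigenvalues
  rw [htr, Fin.sum_univ_two] at this
  exact_mod_cast eq_neg_of_add_eq_zero_right this.symm

lemma sq_eigenvalues_zero (htr : A.trace = 0) : hA.eigenvalues 0 ^ 2 = -RCLike.re A.det := by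
  rw [hA.det_eq_prod_eigenvalues, Fin.prod_univ_two, hA.eigenvalues_one_eq_neg htr]
  simp [sq]

lemma star_eigenvectorUnitary_mul_mul_eigenvectorUnitary (htr : A.trace = 0) :
    star (hA.eigenvectorUnitary : Matrix (Fin 2) (Fin 2) 𝕜) * A * hA.eigenvectorUnitary =
      diagonal ![(hA.eigenvalues 0 : 𝕜), -hA.eigenvalues 0] := by
  rw [← Unitary.conjStarAlgAut_star_apply (S := 𝕜), hA.conjStarAlgAut_star_eigenvectorUnitary]
  congr 1
  ext i
  fin_cases i
  · rfl
  · simp [hA.eigenvalues_one_eq_neg htr]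

end Matrix.IsHermitian

section Kronecker

variable {l m R : Type*} [CommSemiring R]

variable (l R) in
abbrev swapMatrix [DecidableEq l] : Matrix (l × l) (l × l) R :=
  Equiv.Perm.permMatrix R (Equiv.prodComm l l)

lemma swapMatrix_mul_kronecker [Fintype l] [Fintype m] [DecidableEq l] [DecidableEq m]
    (A B : Matrix l m R) : swapMatrix l R * (A ⊗ₖ B) = (B ⊗ₖ A) * swapMatrix m R := by
  rw [PEquiv.toMatrix_toPEquiv_mul, PEquiv.mul_toMatrix_toPEquiv]
  ext ⟨i, i'⟩ ⟨j, j'⟩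
  simp [mul_comm]

lemma Matrix.IsHermitian.kronecker [StarRing R] {A : Matrix l l R} {B : Matrix m m R}
    (hA : A.IsHermitian) (hB : B.IsHermitian) : (A ⊗ₖ B).IsHermitian := by
  rw [IsHermitian, conjTranspose_kronecker, hA.eq, hB.eq]

end Kronecker

lemma sum_kronecker {ι l m n p R : Type*} [NonUnitalNonAssocSemiring R] (s : Finset ι)
    (A : ι → Matrix l m R) (B : Matrix n p R) :
    (∑ i ∈ s, A i) ⊗ₖ B = ∑ i ∈ s, A i ⊗ₖ B := by
  ext
  simp [Matrix.sum_apply, Finset.sum_mul]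

lemma isHermitian_pauli (i : Fin 3) : (pauli i).IsHermitian := by
  fin_cases i <;> ext j k <;> fin_cases j <;> fin_cases k <;> simp [pauli]

lemma isHermitian_sum_smul_pauli (α : Fin 3 → ℝ) : (∑ i, (α i : ℂ) • pauli i).IsHermitian :=
  isSelfAdjoint_sum _ fun i _ ↦ (isHermitian_pauli i).smul (Complex.conj_ofReal (α i))

lemma trace_sum_smul_pauli (α : Fin 3 → ℝ) : (∑ i, (α i : ℂ) • pauli i).trace = 0 := by
  simp [trace, Fin.sum_univ_three, Fin.sum_univ_two, pauli]

lemma det_sum_smul_pauli (α : Fin 3 → ℝ) :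
    (∑ i, (α i : ℂ) • pauli i).det = -↑(∑ i, α i ^ 2) := by
  rw [det_fin_two]
  simp [Fin.sum_univ_three, pauli]
  linear_combination (α 1 : ℂ) ^ 2 * Complex.I_sq

lemma sum_pauli_kronecker_pauli :
    ∑ i, pauli i ⊗ₖ pauli i = (2 : ℂ) • swapMatrix (Fin 2) ℂ - 1 := by
  ext ⟨i, j⟩ ⟨k, l⟩
  fin_cases i <;> fin_cases j <;> fin_cases k <;> fin_cases l <;>
    norm_num [Fin.sum_univ_three, pauli, one_apply, PEquiv.toMatrix_apply]

lemma commute_sum_pauli_kronecker_pauli (U : Matrix (Fin 2) (Fin 2) ℂ) :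
    Commute (∑ i, pauli i ⊗ₖ pauli i) (U ⊗ₖ U) := by
  have hS : Commute (swapMatrix (Fin 2) ℂ) (U ⊗ₖ U) := swapMatrix_mul_kronecker U U
  rw [sum_pauli_kronecker_pauli]
  exact (hS.smul_left _).sub_left (.one_left _)

noncomputable def tau (a : ℝ) (A : Matrix (Fin 2) (Fin 2) ℂ) :
    Matrix (Fin 2 × Fin 2) (Fin 2 × Fin 2) ℂ :=
  (1 / 4 : ℂ) • (1 + A ⊗ₖ 1 + (a : ℂ) • ∑ i, pauli i ⊗ₖ pauli i)

lemma isHermitian_tau {A : Matrix (Fin 2) (Fin 2) ℂ} (hA : A.IsHermitian) (a : ℝ) :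
    (tau a A).IsHermitian := by
  have hP : (∑ i, pauli i ⊗ₖ pauli i).IsHermitian :=
    isSelfAdjoint_sum _ fun i _ ↦ (isHermitian_pauli i).kronecker (isHermitian_pauli i)
  refine IsHermitian.smul ?_ (by simp [isSelfAdjoint_iff] : IsSelfAdjoint (1 / 4 : ℂ))
  exact (isHermitian_one.add (hA.kronecker isHermitian_one)).add (hP.smul (Complex.conj_ofReal a))

section Unitary

variable {U : Matrix (Fin 2) (Fin 2) ℂ} (hU : U ∈ unitary (Matrix (Fin 2) (Fin 2) ℂ))
include hU

lemma star_kronecker_mul_tau_mul_kronecker (a : ℝ) (A : Matrix (Fin 2) (Fin 2) ℂ) :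
    star (U ⊗ₖ U) * tau a A * (U ⊗ₖ U) = tau a (star U * A * U) := by
  have hV : star (U ⊗ₖ U) * (U ⊗ₖ U) = 1 := (kronecker_mem_unitary hU hU).1
  have hA : star (U ⊗ₖ U) * (A ⊗ₖ 1) * (U ⊗ₖ U) = (star U * A * U) ⊗ₖ 1 := by
    rw [star_eq_conjTranspose, conjTranspose_kronecker, ← mul_kronecker_mul, ← mul_kronecker_mul,
      ← star_eq_conjTranspose, mul_one, hU.1]
  have hP : star (U ⊗ₖ U) * (∑ i, pauli i ⊗ₖ pauli i) * (U ⊗ₖ U) = ∑ i, pauli i ⊗ₖ pauli i := by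
    rw [mul_assoc, (commute_sum_pauli_kronecker_pauli U).eq, ← mul_assoc, hV, one_mul]
  simp only [tau, Matrix.mul_smul, Matrix.smul_mul, Matrix.mul_add, Matrix.add_mul, Matrix.mul_one,
    hV, hA, hP]

lemma posSemidef_tau_star_mul_mul_iff (a : ℝ) (A : Matrix (Fin 2) (Fin 2) ℂ) :
    (tau a (star U * A * U)).PosSemidef ↔ (tau a A).PosSemidef := by
  rw [← star_kronecker_mul_tau_mul_kronecker hU]
  exact IsUnit.posSemidef_star_left_conjugate_iff
    (Unitary.isUnit_coe (U := ⟨_, kronecker_mem_unitary hU hU⟩))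

end Unitary

lemma dotProduct_tau_diagonal_mulVec (s a : ℝ) (x : Fin 2 × Fin 2 → ℂ) :
    star x ⬝ᵥ (tau a (diagonal ![(s : ℂ), -s]) *ᵥ x) =
      (((1 + s + a) * ‖x (0, 0)‖ ^ 2 + (1 - s + a) * ‖x (1, 1)‖ ^ 2 +
        (1 + s - a) * ‖x (0, 1)‖ ^ 2 + (1 - s - a) * ‖x (1, 0)‖ ^ 2 +
        4 * a * (starRingEnd ℂ (x (0, 1)) * x (1, 0)).re) / 4 : ℝ) := by
  push_cast
  simp only [← Complex.conj_mul']
  simp [tau, dotProduct, mulVec, Fintype.sum_prod_type, Fin.sum_univ_two, Fin.sum_univ_three,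
    pauli, one_apply, Complex.ext_iff]
  constructor <;> ring

lemma posSemidef_tau_diagonal_iff (s a : ℝ) :
    (tau a (diagonal ![(s : ℂ), -s])).PosSemidef ↔
      |s| ≤ 1 + a ∧ 0 ≤ 1 + s - a ∧ 0 ≤ 1 - s - a ∧ (2 * a) ^ 2 ≤ (1 + s - a) * (1 - s - a) := by
  have hD : (diagonal ![(s : ℂ), -s]).IsHermitian := by
    rw [isHermitian_diagonal_iff]
    intro i; fin_cases i <;> simp [isSelfAdjoint_iff]
  rw [posSemidef_iff_dotProduct_mulVec, and_iff_right (isHermitian_tau hD a), abs_le,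
    ← forall_complex_quadratic_nonneg_iff]
  simp only [dotProduct_tau_diagonal_mulVec, Complex.zero_le_real]
  constructor
  · intro h
    have h₀₀ : 0 ≤ (1 + s + a) / 4 := by simpa using h (Pi.single (0, 0) 1)
    have h₁₁ : 0 ≤ (1 - s + a) / 4 := by simpa using h (Pi.single (1, 1) 1)
    refine ⟨⟨by linarith, by linarith⟩, fun z w ↦ ?_⟩
    have : 0 ≤ ((1 + s - a) * ‖z‖ ^ 2 + (1 - s - a) * ‖w‖ ^ 2 +
        4 * a * (starRingEnd ℂ z * w).re) / 4 := by
      have := h (Pi.single (0, 1) z + Pi.single (1, 0) w)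
      simpa using this
    linarith
  · rintro ⟨⟨hs₁, hs₂⟩, hblock⟩ x
    have := hblock (x (0, 1)) (x (1, 0))
    have h₀₀ : 0 ≤ (1 + s + a) * ‖x (0, 0)‖ ^ 2 := by nlinarith [sq_nonneg ‖x (0, 0)‖]
    have h₁₁ : 0 ≤ (1 - s + a) * ‖x (1, 1)‖ ^ 2 := by nlinarith [sq_nonneg ‖x (1, 1)‖]
    linarith

lemma block_condition_iff_of_sq_eq {a s r : ℝ} (hs : s ^ 2 = r) :
    (|s| ≤ 1 + a ∧ 0 ≤ 1 + s - a ∧ 0 ≤ 1 - s - a ∧ (2 * a) ^ 2 ≤ (1 + s - a) * (1 - s - a)) ↔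
      ((0 ≤ a → a ≤ 1 / 3 ∧ √r ≤ √((1 + a) * (1 - 3 * a))) ∧ (a ≤ 0 → √r ≤ 1 + a)) := by
  subst hs
  have hdet : (1 + s - a) * (1 - s - a) - (2 * a) ^ 2 = (1 + a) * (1 - 3 * a) - s ^ 2 := by ring
  rw [Real.sqrt_sq_eq_abs]
  constructor
  · rintro ⟨h₁, -, -, h₄⟩
    have hs : s ^ 2 ≤ (1 + a) * (1 - 3 * a) := by linarith
    exact ⟨fun ha ↦ ⟨by nlinarith [sq_nonneg s], Real.abs_le_sqrt hs⟩, fun _ ↦ h₁⟩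
  · rintro ⟨hpos, hneg⟩
    suffices |s| ≤ 1 + a ∧ |s| ≤ 1 - a ∧ s ^ 2 ≤ (1 + a) * (1 - 3 * a) by
      obtain ⟨h₁, h₂, h₃⟩ := this
      obtain ⟨h₂₁, h₂₂⟩ := abs_le.1 h₂
      exact ⟨h₁, by linarith, by linarith, by linarith⟩
    rcases le_total 0 a with ha | ha
    · obtain ⟨ha₃, hle⟩ := hpos ha
      have hs : s ^ 2 ≤ (1 + a) * (1 - 3 * a) := by
        rwa [← Real.sqrt_sq_eq_abs, Real.sqrt_le_sqrt_iff (by nlinarith)] at hle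
      exact ⟨abs_le_of_sq_le_sq (by nlinarith) (by linarith),
        abs_le_of_sq_le_sq (by nlinarith) (by linarith), hs⟩
    · have h₁ := hneg ha
      have hs : s ^ 2 ≤ (1 + a) ^ 2 := by rw [← sq_abs]; gcongr
      have ha₁ : 0 ≤ 1 + a := (abs_nonneg s).trans h₁
      exact ⟨h₁, by linarith, by nlinarith [mul_nonneg ha₁ (neg_nonneg.2 ha)]⟩

/-- positivity criterion for
`τ = (1/4)(I⊗I + Σ_i α_i σ^(i)⊗I + a Σ_i σ^(i)⊗σ^(i))`. -/
theorem tau_posSemidef_iff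
    (a : ℝ) (α : Fin 3 → ℝ) :
    ((1/4 : ℂ) • ((1 : Matrix (Fin 2 × Fin 2) (Fin 2 × Fin 2) ℂ) +
        ∑ i, (α i : ℂ) • (pauli i ⊗ₖ (1 : Matrix (Fin 2) (Fin 2) ℂ)) +
        (a : ℂ) • ∑ i, pauli i ⊗ₖ pauli i)).PosSemidef ↔
      ((0 ≤ a → a ≤ 1/3 ∧
          Real.sqrt (∑ i, α i ^ 2) ≤ Real.sqrt ((1 + a) * (1 - 3 * a))) ∧
        (a ≤ 0 → Real.sqrt (∑ i, α i ^ 2) ≤ 1 + a)) := by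
  set A := ∑ i, (α i : ℂ) • pauli i
  have hA : A.IsHermitian := isHermitian_sum_smul_pauli α
  have htr : A.trace = 0 := trace_sum_smul_pauli α
  have hs : hA.eigenvalues 0 ^ 2 = ∑ i, α i ^ 2 := by
    rw [hA.sq_eigenvalues_zero htr, det_sum_smul_pauli, RCLike.re_to_complex, Complex.neg_re,
      Complex.ofReal_re, neg_neg]
  simp_rw [← smul_kronecker, ← sum_kronecker]
  rw [← tau, ← posSemidef_tau_star_mul_mul_iff hA.eigenvectorUnitary.2,
    hA.star_eigenvectorUnitary_mul_mul_eigenvectorUnitary htr]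
  exact (posSemidef_tau_diagonal_iff _ a).trans (block_condition_iff_of_sq_eq hs)
end
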